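/- For $m \geq 2$ even, the Gromov–Hausdorff distance between the vertex set $P_2$ of a regular 2-gon (two antipodal points) and the vertex set $P_m$ of a regular $m$-gon, both inscribed in the unit circle with the geodesic metric, equals $\frac{\pi}{2} - \frac{\pi}{m}$. -/

import Mathlib

open Real

/-- Vertex set of the regular `n`-gon inscribed in the unit circle, modeled inside
`AddCircle (2π)` whose quotient metric is exactly the geodesic metric
`d(α,β) = min (|α-β|) (2π - |α-β|)`. -/
noncomputable def Pvert (n : ℕ) : Set (AddCircle (2 * π)) :=
  Set.range fun j : Fin n => ((2 * π * j / n : ℝ) : AddCircle (2 * π))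

instance (n : ℕ) : Finite (Pvert n) := by unfold Pvert; exact (Set.finite_range _).to_subtype


instance (n : ℕ) [NeZero n] : Nonempty (Pvert n) := by
  unfold Pvert; exact ⟨⟨_, Set.mem_range_self (0 : Fin n)⟩⟩

/-!
The two points of `P₂` are `π` apart and consecutive vertices of `P_m` are `2π/m` apart.
If `P₂` and `P_m` sit in a common space at Hausdorff distance `r < π/2 - π/m`, every vertex of
`P_m` is within `r` of exactly one of the two points, and walking around `P_m` this point can never
change, since a switch would give `π ≤ 2r + 2π/m`; but both points must be approached.
Conversely, for even `m` the points of `P₂` are vertices of `P_m`, and rotating `P₂` by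
`π/2 - π/m` puts the two points of the circle farthest from it exactly halfway between
consecutive vertices of `P_m`.
-/

open Set Metric

theorem dist_lt_of_chain {Z : Type*} [PseudoMetricSpace Z] {a b : Z} {r δ : ℝ} {z : ℕ → Z}
    (hstep : ∀ j, dist (z j) (z (j + 1)) ≤ δ)
    (hcover : ∀ j, dist a (z j) < r ∨ dist b (z j) < r) {i k : ℕ}
    (hi : dist a (z i) < r) (hk : dist b (z k) < r) : dist a b < 2 * r + δ := by
  by_contra! h
  have hδ : 0 ≤ δ := dist_nonneg.trans (hstep 0)
  have not_both : ∀ j, dist a (z j) < r → ¬ dist b (z j) < r := fun j ha hb => by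
    linarith [dist_triangle_right a b (z j)]
  have near_a_succ : ∀ j, dist a (z j) < r ↔ dist a (z (j + 1)) < r := fun j => by
    constructor
    · refine fun ha => (hcover (j + 1)).resolve_right fun hb => ?_
      linarith [dist_triangle4 a (z j) (z (j + 1)) b, dist_comm b (z (j + 1)), hstep j]
    · refine fun ha => (hcover j).resolve_right fun hb => ?_
      linarith [dist_triangle4 a (z (j + 1)) (z j) b, dist_comm b (z j),
        dist_comm (z j) (z (j + 1)), hstep j]
  have near_a_iff : ∀ j, dist a (z j) < r ↔ dist a (z 0) < r := fun j => by
    induction j with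
    | zero => rfl
    | succ j ih => rw [← near_a_succ, ih]
  exact not_both k ((near_a_iff k).2 ((near_a_iff i).1 hi)) hk

theorem GromovHausdorff.dist_sub_le_two_mul_ghDist {X Y : Type*} [MetricSpace X]
    [CompactSpace X] [Nonempty X] [MetricSpace Y] [CompactSpace Y] [Nonempty Y] {a b : X}
    (hX : ∀ x, x = a ∨ x = b) {δ : ℝ} {z : ℕ → Y} (hz : Function.Surjective z)
    (hstep : ∀ j, dist (z j) (z (j + 1)) ≤ δ) : dist a b - δ ≤ 2 * ghDist X Y := by
  suffices key : ∀ r, ghDist X Y < r → dist a b < 2 * r + δ by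
    have := le_of_forall_gt_imp_ge_of_dense fun r hr => (by linarith [key r hr] :
      (dist a b - δ) / 2 ≤ r)
    linarith
  intro r hr
  have hΦ := isometry_optimalGHInjl X Y
  have hΨ := isometry_optimalGHInjr X Y
  set Φ := optimalGHInjl X Y
  set Ψ := optimalGHInjr X Y
  have hH : hausdorffDist (range Φ) (range Ψ) < r := hausdorffDist_optimal.trans_lt hr
  have hfin : hausdorffEDist (range Φ) (range Ψ) ≠ ⊤ :=
    hausdorffEDist_ne_top_of_nonempty_of_bounded (range_nonempty _) (range_nonempty _)
      (isCompact_range hΦ.continuous).isBounded (isCompact_range hΨ.continuous).isBounded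
  have near_z : ∀ x, ∃ j, dist (Φ x) (Ψ (z j)) < r := fun x => by
    obtain ⟨_, ⟨y, rfl⟩, hy⟩ :=
      exists_dist_lt_of_hausdorffDist_lt (mem_range_self x) hH hfin
    obtain ⟨j, rfl⟩ := hz y
    exact ⟨j, hy⟩
  have near_ab : ∀ j, dist (Φ a) (Ψ (z j)) < r ∨ dist (Φ b) (Ψ (z j)) < r := fun j => by
    obtain ⟨_, ⟨x, rfl⟩, hx⟩ :=
      exists_dist_lt_of_hausdorffDist_lt' (mem_range_self (z j)) hH hfin
    rcases hX x with rfl | rfl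
    exacts [Or.inl hx, Or.inr hx]
  obtain ⟨i, hi⟩ := near_z a
  obtain ⟨k, hk⟩ := near_z b
  rw [← hΦ.dist_eq]
  exact dist_lt_of_chain (z := Ψ ∘ z) (fun j => (hΨ.dist_eq _ _).trans_le (hstep j))
    near_ab hi hk

theorem AddCircle.dist_coe_coe_le (p x y : ℝ) :
    dist (x : AddCircle p) (y : AddCircle p) ≤ |x - y| := by
  rw [dist_eq_norm, ← AddCircle.coe_sub]
  exact QuotientAddGroup.norm_mk_le_norm

instance : Fact (0 < 2 * π) := ⟨two_pi_pos⟩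

namespace Pvert

theorem mem_iff {n : ℕ} [NeZero n] {u : AddCircle (2 * π)} : u ∈ Pvert n ↔ n • u = 0 := by
  rw [AddCircle.nsmul_eq_zero_iff (Nat.pos_of_neZero n), Pvert]
  simp only [mem_range, Fin.exists_iff, exists_prop]
  refine exists_congr fun m => and_congr_right fun _ => ?_
  rw [show 2 * π * m / n = m / n * (2 * π) by ring]

theorem subset_of_dvd {k n : ℕ} [NeZero k] [NeZero n] (h : k ∣ n) : Pvert k ⊆ Pvert n := by
  obtain ⟨c, rfl⟩ := h
  intro u hu
  rw [mem_iff] at hu ⊢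
  rw [mul_comm k c, mul_nsmul', hu, nsmul_zero]

variable (n : ℕ) [NeZero n]

-- Indexed by `ℤ` so that stepping from vertex `j` to `j + 1` never wraps around.
noncomputable def vertex (j : ℤ) : Pvert n :=
  ⟨((2 * π * j / n : ℝ) : AddCircle (2 * π)), mem_iff.2 <| by
    rw [← AddCircle.coe_nsmul, nsmul_eq_mul,
      mul_div_cancel₀ _ (Nat.cast_ne_zero.2 (NeZero.ne n)), mul_comm (2 * π), ← zsmul_eq_mul,
      AddCircle.coe_zsmul, AddCircle.coe_period, smul_zero]⟩

theorem exists_vertex_eq (x : Pvert n) : ∃ j : ℕ, j < n ∧ vertex n j = x := by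
  obtain ⟨_, j, rfl⟩ := x
  exact ⟨j, j.isLt, Subtype.ext (by simp [vertex])⟩

theorem surjective_vertex_natCast : Function.Surjective fun j : ℕ => vertex n j := fun x =>
  (exists_vertex_eq n x).imp fun _ => And.right

theorem dist_vertex_succ_le (j : ℤ) : dist (vertex n j) (vertex n (j + 1)) ≤ 2 * π / n := by
  have hn : (0 : ℝ) < n := by exact_mod_cast Nat.pos_of_neZero n
  rw [Subtype.dist_eq]
  refine (AddCircle.dist_coe_coe_le _ _ _).trans_eq ?_
  rw [show 2 * π * j / n - 2 * π * ((j + 1 : ℤ) : ℝ) / n = -(2 * π / n) by push_cast; ring,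
    abs_neg, abs_of_pos (by positivity)]

theorem eq_vertex_zero_or_one (x : Pvert 2) : x = vertex 2 0 ∨ x = vertex 2 1 := by
  obtain ⟨j, hj, rfl⟩ := exists_vertex_eq 2 x
  interval_cases j <;> simp

theorem dist_vertex_zero_one : dist (vertex 2 0) (vertex 2 1) = π := by
  rw [Subtype.dist_eq, dist_comm, dist_eq_norm]
  simp only [vertex]
  rw [← AddCircle.coe_sub]
  simpa [abs_of_pos two_pi_pos] using AddCircle.norm_half_period_eq (p := 2 * π)

open GromovHausdorff in
theorem le_ghDist_two : π / 2 - π / n ≤ ghDist (Pvert 2) (Pvert n) := by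
  have h := dist_sub_le_two_mul_ghDist eq_vertex_zero_or_one (surjective_vertex_natCast n)
    fun j => by simpa using dist_vertex_succ_le n j
  rw [dist_vertex_zero_one] at h
  linarith [mul_div_assoc 2 π (n : ℝ)]

variable {n}

theorem exists_dist_vertex_le (hn : Even n) (j : ℕ) :
    ∃ k : ℤ, dist (vertex n j : AddCircle (2 * π))
      ((vertex 2 k : AddCircle (2 * π)) + ((π / 2 - π / n : ℝ) : AddCircle (2 * π))) ≤
        π / 2 - π / n := by
  obtain ⟨s, rfl⟩ := hn
  have hs : (0 : ℝ) < s := by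
    have := NeZero.ne (s + s)
    norm_cast
    omega
  obtain ⟨k, i, hi, rfl⟩ : ∃ k i, i < s ∧ j = s * k + i :=
    ⟨j / s, j % s, Nat.mod_lt j (by exact_mod_cast hs), (Nat.div_add_mod j s).symm⟩
  have hi' : (i : ℝ) + 1 ≤ s := by exact_mod_cast hi
  refine ⟨k, (AddCircle.dist_coe_coe_le _ _ _).trans ?_⟩
  have key : 2 * π * (((s * k + i : ℕ) : ℤ) : ℝ) / ↑(s + s) -
      (2 * π * ((k : ℤ) : ℝ) / 2 + (π / 2 - π / ↑(s + s))) =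
        π / (2 * s) * (2 * i + 1 - s) := by
    push_cast
    field_simp
    ring
  beta_reduce
  rw [Nat.cast_ofNat, key, abs_mul, abs_of_pos (by positivity)]
  calc π / (2 * s) * |2 * (i : ℝ) + 1 - s| ≤ π / (2 * s) * (s - 1) := by
        gcongr
        exact abs_le.2 ⟨by linarith, by linarith⟩
    _ = π / 2 - π / ↑(s + s) := by
        push_cast
        field_simp
        ring

open GromovHausdorff in
theorem ghDist_two_le_of_even (hn : Even n) : ghDist (Pvert 2) (Pvert n) ≤ π / 2 - π / n := by
  have hn2 : (2 : ℝ) ≤ n := by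
    obtain ⟨s, rfl⟩ := hn
    have := NeZero.ne (s + s)
    norm_cast
    omega
  set r : ℝ := π / 2 - π / n
  have hr : 0 ≤ r := sub_nonneg.2 (div_le_div_of_nonneg_left pi_pos.le two_pos hn2)
  let Φ : Pvert 2 → AddCircle (2 * π) := fun x => x + r
  have hΦ : Isometry Φ := Isometry.of_dist_eq fun x y => dist_add_right _ _ _
  refine (ghDist_le_hausdorffDist hΦ isometry_subtype_coe).trans <|
    hausdorffDist_le_of_mem_dist hr ?_ ?_
  · rintro _ ⟨x, rfl⟩
    refine ⟨x, ⟨⟨x, subset_of_dvd (even_iff_two_dvd.1 hn) x.2⟩, rfl⟩, ?_⟩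
    show dist ((x : AddCircle (2 * π)) + (r : AddCircle (2 * π))) x ≤ r
    rw [dist_self_add_left]
    exact QuotientAddGroup.norm_mk_le_norm.trans_eq (Real.norm_of_nonneg hr)
  · rintro _ ⟨y, rfl⟩
    obtain ⟨j, -, rfl⟩ := exists_vertex_eq _ y
    obtain ⟨k, hk⟩ := exists_dist_vertex_le hn j
    exact ⟨Φ (vertex 2 k), mem_range_self _, hk⟩

end Pvert

theorem stmt6 (m : ℕ) (hm : 2 ≤ m) (heven : Even m) :
    haveI : NeZero m := ⟨by omega⟩
    GromovHausdorff.ghDist (Pvert 2) (Pvert m) = π / 2 - π / m := by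
  have : NeZero m := ⟨by omega⟩
  exact le_antisymm (Pvert.ghDist_two_le_of_even heven) (Pvert.le_ghDist_two m)
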